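/- arXiv:2503.03497 — 2 statements merged into one kernel-verified Lean document; each statement's English description precedes it below -/
import Mathlib

section
/- In the two-seller sequential-search demand system, total demand adds up independently of the search order: D_i¹ + D_j² = 1 − F(p_i)·F(p_j) and D_j¹ + D_i² = 1 − F(p_i)·F(p_j). -/
/-! Both identities are instances of integration by parts for `u ↦ F(u) F(u + Δp)`, whose
derivative `F(u) f(u + Δp) + F(u + Δp) f(u)` is exactly the sum of the two integrands; the
boundary terms at `A` then cancel against the non-integral parts of the demands. The search
order only changes the range of integration, which a translation by `Δp` restores. -/

open MeasureTheory

/-- The CDF associated to density `f` supported on `[0,1]`. -/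
noncomputable def cdf (f : ℝ → ℝ) (x : ℝ) : ℝ := ∫ u in (0:ℝ)..x, f u

section

variable {f : ℝ → ℝ}

lemma hasDerivAt_cdf (hf : Continuous f) (x : ℝ) : HasDerivAt (cdf f) (f x) x :=
  intervalIntegral.integral_hasDerivAt_right (hf.intervalIntegrable _ _)
    (hf.stronglyMeasurableAtFilter _ _) hf.continuousAt

lemma continuous_cdf (hf : Continuous f) : Continuous (cdf f) :=
  continuous_iff_continuousAt.2 fun x => (hasDerivAt_cdf hf x).continuousAt

lemma integral_cdf_mul_add_integral_cdf_add_mul (hf : Continuous f) (c a b : ℝ) :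
    (∫ u in a..b, cdf f u * f (u + c)) + (∫ u in a..b, cdf f (u + c) * f u)
      = cdf f b * cdf f (b + c) - cdf f a * cdf f (a + c) := by
  have hF := continuous_cdf hf
  rw [← intervalIntegral.integral_add (by apply Continuous.intervalIntegrable; fun_prop)
    (by apply Continuous.intervalIntegrable; fun_prop)]
  rw [← intervalIntegral.integral_deriv_mul_eq_sub (u := cdf f) (v := fun u => cdf f (u + c))
    (fun x _ => hasDerivAt_cdf hf x) (fun x _ => (hasDerivAt_cdf hf (x + c)).comp_add_const x c)
    (hf.intervalIntegrable a b) ((hf.comp (continuous_add_const c)).intervalIntegrable a b)]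
  congr 1 with u
  ring

end

theorem total_demand_adds_up_general
    (f : ℝ → ℝ) (hf_cont : Continuous f)
    (A pi pj : ℝ) :
    -- D_i¹ + D_j² = 1 - F(p_i) F(p_j)
    ((1 - cdf f (A + (pi - pj)) + ∫ u in pj..A, cdf f u * f (u + (pi - pj)))
        + ((1 - cdf f A) * cdf f (A + (pi - pj))
            + ∫ u in pj..A, cdf f (u + (pi - pj)) * f u))
        = 1 - cdf f pi * cdf f pj
      ∧
    -- D_j¹ + D_i² = 1 - F(p_i) F(p_j)
    ((1 - cdf f (A - (pi - pj)) + ∫ u in pi..A, cdf f u * f (u - (pi - pj)))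
        + ((1 - cdf f A) * cdf f (A - (pi - pj))
            + ∫ u in pj..(A - (pi - pj)), cdf f u * f (u + (pi - pj))))
        = 1 - cdf f pi * cdf f pj := by
  have hpj : pj + (pi - pj) = pi := by ring
  have hA : A - (pi - pj) + (pi - pj) = A := by ring
  have hi_first := integral_cdf_mul_add_integral_cdf_add_mul hf_cont (pi - pj) pj A
  have hj_first := integral_cdf_mul_add_integral_cdf_add_mul hf_cont (pi - pj) pj (A - (pi - pj))
  rw [hpj] at hi_first
  rw [hpj, hA] at hj_first
  have hshift : (∫ u in pi..A, cdf f u * f (u - (pi - pj)))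
      = ∫ u in pj..(A - (pi - pj)), cdf f (u + (pi - pj)) * f u := by
    have := intervalIntegral.integral_comp_add_right (a := pj) (b := A - (pi - pj))
      (fun w => cdf f w * f (w - (pi - pj))) (pi - pj)
    simp only [add_sub_cancel_right, hpj, hA] at this
    exact this.symm
  rw [hshift]
  exact ⟨by linear_combination hi_first, by linear_combination hj_first⟩

/-- Total demand adds up independently of the search order:
`D_i¹ + D_j² = 1 - F(p_i)·F(p_j)` and `D_j¹ + D_i² = 1 - F(p_i)·F(p_j)`. -/
theorem total_demand_adds_up
    (f : ℝ → ℝ) (hf_cont : Continuous f) (hf_nonneg : ∀ x, 0 ≤ f x)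
    (hf_supp : ∀ x, x < 0 ∨ 1 < x → f x = 0)
    (hf_total : (∫ u in (0:ℝ)..1, f u) = 1)
    (A pi pj : ℝ) (hpi : 0 ≤ pi) (hpj : 0 ≤ pj)
    (hpiA : pi ≤ A) (hpjA : pj ≤ A) (hA1 : A ≤ 1)
    (hgap : |pi - pj| ≤ 1 - A) :
    -- D_i¹ + D_j² = 1 - F(p_i) F(p_j)
    ((1 - cdf f (A + (pi - pj)) + ∫ u in pj..A, cdf f u * f (u + (pi - pj)))
        + ((1 - cdf f A) * cdf f (A + (pi - pj))
            + ∫ u in pj..A, cdf f (u + (pi - pj)) * f u))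
        = 1 - cdf f pi * cdf f pj
      ∧
    -- D_j¹ + D_i² = 1 - F(p_i) F(p_j)
    ((1 - cdf f (A - (pi - pj)) + ∫ u in pi..A, cdf f u * f (u - (pi - pj)))
        + ((1 - cdf f A) * cdf f (A - (pi - pj))
            + ∫ u in pj..(A - (pi - pj)), cdf f u * f (u + (pi - pj))))
        = 1 - cdf f pi * cdf f pj :=
  total_demand_adds_up_general f hf_cont A pi pj
end

section
/- Industry profit is minimized at the lowest symmetric implementable contract (uniform case): let A ∈ (0,1), assume the A-large condition (every (p1,p2) ∈ P satisfies p1 ≤ A, p2 ≤ A and |p1 − p2| ≤ 1 − A), assume {p ∈ (0,1] : H(p,p) ≤ 0} is nonempty, and let p̲ = inf{p ∈ (0,1] : H(p,p) ≤ 0}. Then (p̲,p̲) ∈ P, 1/2 ∈ φ(p̲,p̲), J^Π(p̲,p̲,1/2) = p̲·(1−p̲²), and for every (p1,p2) ∈ P and every α ∈ φ(p1,p2), J^Π(p1,p2,α) ≥ p̲·(1−p̲²). -/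
/-- Demand of seller 1 when ranked second (uniform match utilities). -/
noncomputable def D12 (A p1 p2 : ℝ) : ℝ := -A^2/2 + p1^2/2 - p1*p2 + A - p1 + p2

/-- Demand of seller 2 when ranked second (uniform match utilities). -/
noncomputable def D22 (A p1 p2 : ℝ) : ℝ := -A^2/2 + p2^2/2 - p1*p2 + A + p1 - p2

/-- The bonus from being ranked first instead of second (uniform case). -/
noncomputable def bonus (A p1 p2 : ℝ) : ℝ := (1-A)^2 - (1/2)*(p1-p2)^2

/-- Seller 1's optimal deviation value when ranked second. -/
noncomputable def M1 (A p2 : ℝ) : ℝ :=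
  sSup ((fun p' => p' * D12 A p' p2) '' Set.Icc (0:ℝ) 1)

/-- Seller 2's optimal deviation value when ranked second. -/
noncomputable def M2 (A p1 : ℝ) : ℝ :=
  sSup ((fun p' => p' * D22 A p1 p') '' Set.Icc (0:ℝ) 1)

/-- The function whose nonpositivity characterizes implementable prices. -/
noncomputable def H (A p1 p2 : ℝ) : ℝ := M1 A p2 / p1 + M2 A p1 / p2 + p1*p2 - 1

/-- The set of implementable prices. -/
def implementableP (A : ℝ) : Set (ℝ × ℝ) :=
  {q | 0 < q.1 ∧ q.1 ≤ 1 ∧ 0 < q.2 ∧ q.2 ≤ 1 ∧ H A q.1 q.2 ≤ 0}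

/-- The set of implementable search orders at prices `(p1, p2)`. -/
def phi (A p1 p2 : ℝ) : Set ℝ :=
  {α | α ∈ Set.Icc (0:ℝ) 1
    ∧ M1 A p2 ≤ p1 * D12 A p1 p2 + α * p1 * bonus A p1 p2
    ∧ M2 A p1 ≤ p2 * D22 A p1 p2 + (1-α) * p2 * bonus A p1 p2}

/-- Industry profit under contract `(p1, p2, α)` (uniform case). -/
noncomputable def JPi (A p1 p2 α : ℝ) : ℝ :=
  p1 * D12 A p1 p2 + p2 * D22 A p1 p2
    + α * p1 * bonus A p1 p2 + (1-α) * p2 * bonus A p1 p2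

/-!
By symmetry `M2 A = M1 A =: m`, and `m` is nondecreasing and convex, being a supremum of
affine functions of the rival's price with nonnegative slopes. On the diagonal, `H(p,p) ≤ 0`
reads `2 m(p) ≤ p (1 - p²)`; since `m` is monotone, `p̲` satisfies this with equality and
lies below `1/√3`, where `p (1 - p²)` is increasing. Adding the two constraints of `φ` bounds
industry profit below by `m(p₁) + m(p₂)`. For `(p₁, p₂) ∈ P` with midpoint `s`, clearing
denominators in `H(p₁, p₂) ≤ 0` and rearranging gives
`s (m(p₁) + m(p₂)) ≤ p₁p₂ (1 - p₁p₂) ≤ s² (1 - s²)`, so by convexity `2 m(s) ≤ s (1 - s²)`;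
hence `s ≥ p̲` and `m(p₁) + m(p₂) ≥ 2 m(s) ≥ 2 m(p̲) = p̲ (1 - p̲²)`.
-/

open Set

lemma ConvexOn.two_mul_apply_add_div_two_le {f : ℝ → ℝ} (hf : ConvexOn ℝ univ f) (a b : ℝ) :
    2 * f ((a + b) / 2) ≤ f a + f b := by
  have h := hf.2 (mem_univ a) (mem_univ b) (by norm_num : (0 : ℝ) ≤ 1 / 2)
    (by norm_num : (0 : ℝ) ≤ 1 / 2) (by norm_num)
  simp only [smul_eq_mul] at h
  rw [show (a + b) / 2 = 1 / 2 * a + 1 / 2 * b by ring]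
  linarith

lemma M2_eq_M1 (A t : ℝ) : M2 A t = M1 A t := by
  have h : (fun p' => p' * D22 A t p') = (fun p' => p' * D12 A p' t) := by
    funext p'; simp only [D12, D22]; ring
  rw [M2, h, M1]

lemma le_M1 (A t : ℝ) {q : ℝ} (hq : q ∈ Icc (0 : ℝ) 1) : q * D12 A q t ≤ M1 A t :=
  le_csSup (isCompact_Icc.bddAbove_image (by unfold D12; fun_prop)) (mem_image_of_mem _ hq)

lemma M1_le {A t c : ℝ} (h : ∀ q ∈ Icc (0 : ℝ) 1, q * D12 A q t ≤ c) : M1 A t ≤ c :=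
  csSup_le ((nonempty_Icc.2 zero_le_one).image _) (forall_mem_image.2 h)

lemma monotone_M1 (A : ℝ) : Monotone (M1 A) := by
  intro s t hst
  refine M1_le fun q hq => le_trans ?_ (le_M1 A t hq)
  have hslope : 0 ≤ q * (1 - q) * (t - s) :=
    mul_nonneg (mul_nonneg hq.1 (sub_nonneg.2 hq.2)) (sub_nonneg.2 hst)
  simp only [D12]
  linarith

lemma convexOn_M1 (A : ℝ) : ConvexOn ℝ univ (M1 A) := by
  refine ⟨convex_univ, fun s _ t _ a b ha hb hab => M1_le fun q hq => ?_⟩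
  have hs := mul_le_mul_of_nonneg_left (le_M1 A s hq) ha
  have ht := mul_le_mul_of_nonneg_left (le_M1 A t hq) hb
  have : q * D12 A q (a • s + b • t) = a * (q * D12 A q s) + b * (q * D12 A q t) := by
    simp only [smul_eq_mul, D12]
    linear_combination (-(q * (-A ^ 2 / 2 + q ^ 2 / 2 + A - q))) * hab
  rw [this]
  simpa only [smul_eq_mul] using add_le_add hs ht

lemma M1_zero_pos {A : ℝ} (hA : A ∈ Ioo (0 : ℝ) 1) : 0 < M1 A 0 := by
  obtain ⟨hA0, hA1⟩ := hA
  have hle := le_M1 A 0 (q := A / 2) ⟨by linarith, by linarith⟩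
  have heq : A / 2 * D12 A (A / 2) 0 = A ^ 2 / 16 * (4 - 3 * A) := by simp only [D12]; ring
  have hpos : 0 < A ^ 2 / 16 * (4 - 3 * A) := mul_pos (by positivity) (by linarith)
  linarith

lemma H_nonpos_iff {A p1 p2 : ℝ} (hp1 : 0 < p1) (hp2 : 0 < p2) :
    H A p1 p2 ≤ 0 ↔ p1 * M1 A p1 + p2 * M1 A p2 ≤ p1 * p2 * (1 - p1 * p2) := by
  have : H A p1 p2 = (p1 * M1 A p1 + p2 * M1 A p2 - p1 * p2 * (1 - p1 * p2)) / (p1 * p2) := by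
    rw [H, M2_eq_M1]; field_simp; ring
  rw [this, div_nonpos_iff]
  constructor
  · rintro (⟨-, h⟩ | ⟨h, -⟩)
    · nlinarith [mul_pos hp1 hp2]
    · linarith
  · exact fun h => Or.inr ⟨by linarith, (mul_pos hp1 hp2).le⟩

lemma H_self_nonpos_iff {A p : ℝ} (hp : 0 < p) :
    H A p p ≤ 0 ↔ 2 * M1 A p ≤ p * (1 - p ^ 2) := by
  rw [H_nonpos_iff hp hp]
  constructor <;> intro h <;> nlinarith

lemma half_mem_phi_self {A p : ℝ} (h : 2 * M1 A p ≤ p * (1 - p ^ 2)) :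
    (1 / 2 : ℝ) ∈ phi A p p := by
  have h1 : p * D12 A p p + 1 / 2 * p * bonus A p p = p * (1 - p ^ 2) / 2 := by
    simp only [D12, bonus]; ring
  have h2 : p * D22 A p p + (1 - 1 / 2) * p * bonus A p p = p * (1 - p ^ 2) / 2 := by
    simp only [D22, bonus]; ring
  refine ⟨⟨by norm_num, by norm_num⟩, ?_, ?_⟩
  · linarith
  · rw [M2_eq_M1]; linarith

lemma JPi_self_half (A p : ℝ) : JPi A p p (1 / 2) = p * (1 - p ^ 2) := by
  simp only [JPi, D12, D22, bonus]; ring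

lemma M1_add_M1_le_JPi {A p1 p2 α : ℝ} (hα : α ∈ phi A p1 p2) :
    M1 A p1 + M1 A p2 ≤ JPi A p1 p2 α := by
  obtain ⟨-, h1, h2⟩ := hα
  rw [M2_eq_M1] at h2
  rw [JPi]
  linarith

/-- For `m = M1 A` these are the `p ∈ (0, 1]` with `H A p p ≤ 0` (`H_self_nonpos_iff`). -/
def symmetricPrices (m : ℝ → ℝ) : Set ℝ :=
  {p | p ∈ Ioc (0 : ℝ) 1 ∧ 2 * m p ≤ p * (1 - p ^ 2)}

lemma setOf_H_self_nonpos_eq (A : ℝ) :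
    {p : ℝ | p ∈ Ioc (0 : ℝ) 1 ∧ H A p p ≤ 0} = symmetricPrices (M1 A) := by
  ext p
  exact and_congr_right fun hp => H_self_nonpos_iff hp.1

section symmetricPrices

variable {m : ℝ → ℝ}

lemma bddBelow_symmetricPrices : BddBelow (symmetricPrices m) :=
  ⟨0, fun _ hp => hp.1.1.le⟩

lemma two_mul_apply_zero_le_of_mem (hm : Monotone m) {p : ℝ} (hp : p ∈ symmetricPrices m) :
    2 * m 0 ≤ p := by
  obtain ⟨⟨hp0, -⟩, h⟩ := hp
  nlinarith [pow_pos hp0 3, hm hp0.le]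

lemma exists_mem_symmetricPrices_le_sqrt (hm : Monotone m) (hm0 : 0 < m 0)
    (hne : (symmetricPrices m).Nonempty) : ∃ p ∈ symmetricPrices m, p ≤ √(1 / 3) := by
  obtain ⟨p₀, hp₀⟩ := hne
  set c := √(1 / 3)
  have hc : c ^ 2 = 1 / 3 := Real.sq_sqrt (by norm_num)
  have hc0 : 0 < c := by positivity
  rcases le_or_gt p₀ c with h | h
  · exact ⟨p₀, hp₀, h⟩
  obtain ⟨⟨hp0, hp1⟩, hup⟩ := hp₀
  have hpos : 0 < p₀ * (1 - p₀ ^ 2) := by linarith [hm hp0.le]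
  -- `x ↦ x (1 - x²)` increases up to `c = 1/√3` and decreases after it
  have hle : p₀ * (1 - p₀ ^ 2) ≤ c * (1 - c ^ 2) := by
    have hsum : 0 ≤ p₀ ^ 2 + p₀ * c + c ^ 2 - 1 := by nlinarith
    nlinarith [mul_nonneg (sub_nonneg.2 h.le) hsum]
  obtain ⟨p, ⟨hp0', hpc⟩, hp⟩ := intermediate_value_Icc hc0.le
    (f := fun x : ℝ => x * (1 - x ^ 2)) (by fun_prop) ⟨by simpa using hpos.le, hle⟩
  simp only at hp
  have hgp : 0 < p * (1 - p ^ 2) := hp ▸ hpos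
  have hp_pos : 0 < p := hp0'.lt_of_ne (by rintro rfl; simp at hgp)
  refine ⟨p, ⟨⟨hp_pos, hpc.trans (by nlinarith)⟩, ?_⟩, hpc⟩
  linarith [hm (hpc.trans h.le)]

lemma two_mul_apply_zero_le_sInf (hm : Monotone m) (hne : (symmetricPrices m).Nonempty) :
    2 * m 0 ≤ sInf (symmetricPrices m) :=
  le_csInf hne fun _ hp => two_mul_apply_zero_le_of_mem hm hp

lemma sInf_symmetricPrices_le_one (hne : (symmetricPrices m).Nonempty) :
    sInf (symmetricPrices m) ≤ 1 :=
  let ⟨_, hp⟩ := hne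
  (csInf_le bddBelow_symmetricPrices hp).trans hp.1.2

lemma sInf_symmetricPrices_le_sqrt (hm : Monotone m) (hm0 : 0 < m 0)
    (hne : (symmetricPrices m).Nonempty) : sInf (symmetricPrices m) ≤ √(1 / 3) :=
  let ⟨_, hp, hpc⟩ := exists_mem_symmetricPrices_le_sqrt hm hm0 hne
  (csInf_le bddBelow_symmetricPrices hp).trans hpc

lemma sInf_mem_symmetricPrices (hm : Monotone m) (hm0 : 0 < m 0)
    (hne : (symmetricPrices m).Nonempty) : sInf (symmetricPrices m) ∈ symmetricPrices m := by
  set p := sInf (symmetricPrices m)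
  refine ⟨⟨by linarith [two_mul_apply_zero_le_sInf hm hne], sInf_symmetricPrices_le_one hne⟩, ?_⟩
  have hsub : symmetricPrices m ⊆ {x | 2 * m p ≤ x * (1 - x ^ 2)} := fun x hx =>
    (mul_le_mul_of_nonneg_left (hm (csInf_le bddBelow_symmetricPrices hx)) zero_le_two).trans hx.2
  exact closure_minimal hsub (isClosed_le continuous_const (by fun_prop))
    (csInf_mem_closure hne bddBelow_symmetricPrices)

lemma sInf_symmetricPrices_le_two_mul (hm : Monotone m) (hm0 : 0 < m 0)
    (hne : (symmetricPrices m).Nonempty) :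
    sInf (symmetricPrices m) * (1 - sInf (symmetricPrices m) ^ 2) ≤
      2 * m (sInf (symmetricPrices m)) := by
  set p := sInf (symmetricPrices m)
  have hp0 : 0 < p := by linarith [two_mul_apply_zero_le_sInf hm hne]
  have hsub : Ioo 0 p ⊆ {x | x * (1 - x ^ 2) ≤ 2 * m p} := fun x hx => by
    have hx1 : x ≤ 1 := hx.2.le.trans (sInf_symmetricPrices_le_one hne)
    have hxS : x ∉ symmetricPrices m := fun h =>
      hx.2.not_ge (csInf_le bddBelow_symmetricPrices h)
    have hlt : x * (1 - x ^ 2) < 2 * m x := not_le.1 fun h => hxS ⟨⟨hx.1, hx1⟩, h⟩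
    exact hlt.le.trans (by linarith [hm hx.2.le])
  refine closure_minimal hsub (isClosed_le (by fun_prop) continuous_const) ?_
  rw [closure_Ioo hp0.ne]
  exact right_mem_Icc.2 hp0.le

lemma sInf_symmetricPrices_le_midpoint (hm : Monotone m) (hconv : ConvexOn ℝ univ m)
    (hm0 : 0 < m 0) (hne : (symmetricPrices m).Nonempty) {a b : ℝ} (ha : 0 < a) (hb : 0 < b)
    (h : a * m a + b * m b ≤ a * b * (1 - a * b)) : sInf (symmetricPrices m) ≤ (a + b) / 2 := by
  wlog hab : a ≤ b generalizing a b
  · rw [add_comm]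
    exact this hb ha (by linarith) (le_of_not_ge hab)
  by_contra! hlt
  set s := (a + b) / 2 with hs_def
  have hs : 0 < s := by positivity
  have hgs : s * (1 - s ^ 2) < 2 * m s := by
    by_contra! hle
    have hs1 : s ≤ 1 := hlt.le.trans (sInf_symmetricPrices_le_one hne)
    exact hlt.not_ge (csInf_le bddBelow_symmetricPrices ⟨⟨hs, hs1⟩, hle⟩)
  have hs2 : s ^ 2 ≤ 1 / 3 := by
    have hsc := hlt.le.trans (sInf_symmetricPrices_le_sqrt hm hm0 hne)
    rw [← Real.sq_sqrt (show (0 : ℝ) ≤ 1 / 3 by norm_num)]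
    gcongr
  have hmid := hconv.two_mul_apply_add_div_two_le a b
  have hcheb : s * (m a + m b) ≤ a * m a + b * m b := by
    rw [hs_def]
    nlinarith [mul_nonneg (sub_nonneg.2 hab) (sub_nonneg.2 (hm hab))]
  -- `x ↦ x (1 - x)` increases on `[0, 1/2]`, and `a b ≤ s² ≤ 1/3`
  have hprod : a * b * (1 - a * b) ≤ s ^ 2 * (1 - s ^ 2) := by
    have hab2 : a * b ≤ s ^ 2 := by rw [hs_def]; nlinarith [sq_nonneg (a - b)]
    nlinarith
  nlinarith [mul_lt_mul_of_pos_left hgs hs, mul_le_mul_of_nonneg_left hmid hs.le]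

end symmetricPrices

theorem industry_profit_min_general
    (A : ℝ) (hA : A ∈ Set.Ioo (0:ℝ) 1)
    (hne : {p : ℝ | p ∈ Set.Ioc (0:ℝ) 1 ∧ H A p p ≤ 0}.Nonempty)
    (plow : ℝ) (hplow : plow = sInf {p : ℝ | p ∈ Set.Ioc (0:ℝ) 1 ∧ H A p p ≤ 0}) :
    (plow, plow) ∈ implementableP A
      ∧ (1/2 : ℝ) ∈ phi A plow plow
      ∧ JPi A plow plow (1/2) = plow * (1 - plow^2)
      ∧ ∀ q ∈ implementableP A, ∀ α ∈ phi A q.1 q.2,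
          plow * (1 - plow^2) ≤ JPi A q.1 q.2 α := by
  rw [setOf_H_self_nonpos_eq] at hne hplow
  subst hplow
  have hm := monotone_M1 A
  have hm0 := M1_zero_pos hA
  obtain ⟨⟨hlow0, hlow1⟩, hup⟩ := sInf_mem_symmetricPrices hm hm0 hne
  refine ⟨⟨hlow0, hlow1, hlow0, hlow1, (H_self_nonpos_iff hlow0).2 hup⟩, half_mem_phi_self hup,
    JPi_self_half A _, ?_⟩
  rintro ⟨p1, p2⟩ ⟨hp1, -, hp2, -, hH⟩ α hα
  have hmid := sInf_symmetricPrices_le_midpoint hm (convexOn_M1 A) hm0 hne hp1 hp2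
    ((H_nonpos_iff hp1 hp2).1 hH)
  calc _ ≤ 2 * M1 A (sInf (symmetricPrices (M1 A))) := sInf_symmetricPrices_le_two_mul hm hm0 hne
    _ ≤ 2 * M1 A ((p1 + p2) / 2) := by gcongr; exact hm hmid
    _ ≤ M1 A p1 + M1 A p2 := (convexOn_M1 A).two_mul_apply_add_div_two_le p1 p2
    _ ≤ JPi A p1 p2 α := M1_add_M1_le_JPi hα

/-- Industry profit is minimized at the lowest symmetric implementable contract
(uniform case): the contract `(p̲, p̲, 1/2)` is implementable, yields profit
`p̲·(1-p̲²)`, and every implementable contract yields at least this profit. -/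
theorem industry_profit_min
    (A : ℝ) (hA : A ∈ Set.Ioo (0:ℝ) 1)
    (hlarge : ∀ q ∈ implementableP A, q.1 ≤ A ∧ q.2 ≤ A ∧ |q.1 - q.2| ≤ 1 - A)
    (hne : {p : ℝ | p ∈ Set.Ioc (0:ℝ) 1 ∧ H A p p ≤ 0}.Nonempty)
    (plow : ℝ) (hplow : plow = sInf {p : ℝ | p ∈ Set.Ioc (0:ℝ) 1 ∧ H A p p ≤ 0}) :
    (plow, plow) ∈ implementableP A
      ∧ (1/2 : ℝ) ∈ phi A plow plow
      ∧ JPi A plow plow (1/2) = plow * (1 - plow^2)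
      ∧ ∀ q ∈ implementableP A, ∀ α ∈ phi A q.1 q.2,
          plow * (1 - plow^2) ≤ JPi A q.1 q.2 α :=
  industry_profit_min_general A hA hne plow hplow
end
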